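/- For the DFAs A' and B constructed from a monotone circuit g_1,…,g_n: if there exists an infinite tower between L(A') and L(B), then val(n) = 1. -/

import Mathlib

/-- The type of a gate in a monotone circuit with `n + 1` gates: a `0`-gate, a
`1`-gate, an `∧`-gate with children `l, r`, or an `∨`-gate with children `l, r`. -/
inductive Gate (n : ℕ) where
  | zero : Gate n
  | one : Gate n
  | and (l r : Fin (n + 1)) : Gate n
  | or (l r : Fin (n + 1)) : Gate n

/-- A monotone circuit with gates `g_0, …, g_n`, where the children of each
`∧`- or `∨`-gate have strictly smaller indices. -/
structure Circuit (n : ℕ) where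
  gate : Fin (n + 1) → Gate n
  and_lt : ∀ i l r, gate i = Gate.and l r → l < i ∧ r < i
  or_lt : ∀ i l r, gate i = Gate.or l r → l < i ∧ r < i

set_option linter.unusedVariables false in
/-- The value of gate `i`: `0`-gates are false, `1`-gates are true, `∧`-gates and
`∨`-gates take the conjunction resp. disjunction of their children's values. -/
def Circuit.val {n : ℕ} (c : Circuit n) (i : Fin (n + 1)) : Bool :=
  match h : c.gate i with
  | Gate.zero => false
  | Gate.one => true
  | Gate.and l r =>
      have hlt := c.and_lt i l r h;
      c.val l && c.val r
  | Gate.or l r =>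
      have hlt := c.or_lt i l r h
      c.val l || c.val r
termination_by (i : ℕ)
decreasing_by
  · exact hlt.1
  · exact hlt.2
  · exact hlt.1
  · exact hlt.2

/-- The alphabet `Σ = {x, y} ∪ {aᵢ, bᵢ : 0 ≤ i ≤ n}`. -/
inductive Alpha (n : ℕ) where
  | x : Alpha n
  | y : Alpha n
  | a (i : Fin (n + 1)) : Alpha n
  | b (i : Fin (n + 1)) : Alpha n
deriving DecidableEq

/-- The states of the DFA `A'`: the initial state `s`, the accepting states
`⊥` (bot) and `⊤` (top), a state for each gate, and a non-accepting sink. -/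
inductive StA (n : ℕ) where
  | s : StA n
  | bot : StA n
  | top : StA n
  | g (i : Fin (n + 1)) : StA n
  | sink : StA n
deriving DecidableEq

/-- The DFA `A'` constructed from the monotone circuit `c`. -/
def dfaA {n : ℕ} (c : Circuit n) : DFA (Alpha n) (StA n) where
  step := fun p ch =>
    match p, ch with
    | StA.s, Alpha.x => StA.g (Fin.last n)
    | StA.top, Alpha.y => StA.s
    | StA.g i, Alpha.a j =>
        if j = i then
          match c.gate i with
          | Gate.zero => StA.bot
          | Gate.one => StA.top
          | Gate.and l _ => StA.g l
          | Gate.or l _ => StA.g l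
        else StA.sink
    | StA.g i, Alpha.b j =>
        if j = i then
          match c.gate i with
          | Gate.zero => StA.bot
          | Gate.one => StA.top
          | Gate.and _ r => StA.g r
          | Gate.or _ r => StA.g r
        else StA.sink
    | _, _ => StA.sink
  start := StA.s
  accept := {StA.bot, StA.top}

/-- The states of the DFA `B`: the initial and accepting state `q`, a state `t`,
a state for each gate (only the `∧`-gate states are used), and a sink. -/
inductive StB (n : ℕ) where
  | q : StB n
  | t : StB n
  | g (i : Fin (n + 1)) : StB n
  | sink : StB n
deriving DecidableEq

/-- The DFA `B` constructed from the monotone circuit `c`. -/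
def dfaB {n : ℕ} (c : Circuit n) : DFA (Alpha n) (StB n) where
  step := fun p ch =>
    match p, ch with
    | StB.q, Alpha.x => StB.t
    | StB.t, Alpha.y => StB.q
    | StB.t, Alpha.a i =>
        match c.gate i with
        | Gate.and _ _ => StB.g i
        | Gate.or _ _ => StB.t
        | Gate.one => StB.t
        | Gate.zero => StB.sink
    | StB.t, Alpha.b i =>
        match c.gate i with
        | Gate.or _ _ => StB.t
        | Gate.one => StB.t
        | _ => StB.sink
    | StB.g i, Alpha.b j =>
        if j = i then
          match c.gate i with
          | Gate.and _ _ => StB.t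
          | _ => StB.sink
        else StB.sink
    | _, _ => StB.sink
  start := StB.q
  accept := {StB.q}

/-- `w` is an infinite tower between the languages `K` and `L`:
`w 0 ∈ K ∪ L`, each word is a subsequence of the next, a word in `K` is followed by a
word in `L`, and a word in `L` is followed by a word in `K`. -/
def IsInfiniteTower {α : Type*} (K L : Set (List α)) (w : ℕ → List α) : Prop :=
  w 0 ∈ K ∪ L ∧ (∀ i, (w i).Sublist (w (i + 1))) ∧
    (∀ i, w i ∈ K → w (i + 1) ∈ L) ∧ (∀ i, w i ∈ L → w (i + 1) ∈ K)

/-- There exists an infinite tower between `K` and `L`. -/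
def HasInfiniteTower {α : Type*} (K L : Set (List α)) : Prop :=
  ∃ w : ℕ → List α, IsInfiniteTower K L w

/-! If the output gate is false, an accepting run of `A'` starts there and, through false
`∨`-gates, can only move to false children, so every word of `L(A')` contains a letter of a false
`0`- or `∧`-gate. A word of `L(B)` contains no letter of a `0`-gate, and contains `aⱼ` for an
`∧`-gate `j` iff it contains `bⱼ`. So if a word of `L(A')` in the tower contains a letter of a
false `∧`-gate `j`, the word of `L(A')` two steps later contains both `aⱼ` and `bⱼ`; the one
leading to a false child of `j` is followed by a letter of a false `0`- or `∧`-gate below `j`.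
Descending, one reaches a letter of a `0`-gate, which the next word of `L(B)` cannot contain. -/

namespace DFA

variable {α σ : Type*} {M : DFA α σ} {s : σ}

structure IsSink (M : DFA α σ) (s : σ) : Prop where
  step_eq : ∀ a, M.step s a = s
  not_mem_accept : s ∉ M.accept

namespace IsSink

theorem evalFrom_eq (hs : M.IsSink s) (u : List α) : M.evalFrom s u = s := by
  induction u with
  | nil => rfl
  | cons a u ih => rw [evalFrom_cons, hs.step_eq, ih]

theorem ne_of_evalFrom_mem_accept (hs : M.IsSink s) {p : σ} {u : List α}
    (h : M.evalFrom p u ∈ M.accept) : p ≠ s := by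
  rintro rfl
  exact hs.not_mem_accept (hs.evalFrom_eq u ▸ h)

theorem exists_eq_append_cons_of_mem_accepts (hs : M.IsSink s) {u : List α} {a : α}
    (hu : u ∈ M.accepts) (ha : a ∈ u) :
    ∃ v w, u = v ++ a :: w ∧ M.step (M.eval v) a ≠ s ∧
      M.evalFrom (M.step (M.eval v) a) w ∈ M.accept := by
  obtain ⟨v, w, rfl⟩ := List.append_of_mem ha
  rw [mem_accepts, eval, evalFrom_of_append, evalFrom_cons] at hu
  exact ⟨v, w, rfl, hs.ne_of_evalFrom_mem_accept hu, hu⟩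

end IsSink

end DFA

namespace IsInfiniteTower

variable {α : Type*} {K L : Set (List α)} {w : ℕ → List α}

theorem sublist_succ (hw : IsInfiniteTower K L w) (t : ℕ) : (w t).Sublist (w (t + 1)) :=
  hw.2.1 t

theorem succ_mem_right (hw : IsInfiniteTower K L w) {t : ℕ} (h : w t ∈ K) : w (t + 1) ∈ L :=
  hw.2.2.1 t h

theorem succ_mem_left (hw : IsInfiniteTower K L w) {t : ℕ} (h : w t ∈ L) : w (t + 1) ∈ K :=
  hw.2.2.2 t h

theorem exists_mem_left (hw : IsInfiniteTower K L w) : ∃ t, w t ∈ K :=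
  hw.1.elim (⟨0, ·⟩) fun h => ⟨1, hw.succ_mem_left h⟩

end IsInfiniteTower

section

variable {n : ℕ} (c : Circuit n)

namespace Circuit

theorem val_one {i : Fin (n + 1)} (h : c.gate i = Gate.one) : c.val i = true := by
  rw [Circuit.val]; split <;> simp_all

theorem val_and {i l r : Fin (n + 1)} (h : c.gate i = Gate.and l r) :
    c.val i = (c.val l && c.val r) := by
  rw [Circuit.val]; split <;> simp_all

theorem val_or {i l r : Fin (n + 1)} (h : c.gate i = Gate.or l r) :
    c.val i = (c.val l || c.val r) := by
  rw [Circuit.val]; split <;> simp_all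

/-- A false gate from which an accepting run of `A'` need not continue to a false gate. -/
def IsBlocking (j : Fin (n + 1)) : Prop :=
  c.val j = false ∧ (c.gate j = Gate.zero ∨ ∃ l r, c.gate j = Gate.and l r)

end Circuit

section AutomatonA

theorem isSink_dfaA : (dfaA c).IsSink StA.sink := ⟨fun _ => rfl, by simp [dfaA]⟩

theorem dfaA_step_start {ch : Alpha n} (h : (dfaA c).step (dfaA c).start ch ≠ StA.sink) :
    (dfaA c).step (dfaA c).start ch = StA.g (Fin.last n) := by
  cases ch <;> simp_all [dfaA]

theorem dfaA_step_g {i : Fin (n + 1)} {ch : Alpha n} (h : (dfaA c).step (StA.g i) ch ≠ StA.sink) :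
    ch = Alpha.a i ∨ ch = Alpha.b i := by
  cases ch <;> simp_all [dfaA]

theorem dfaA_step_a_of_and {p : StA n} {j l r : Fin (n + 1)} (hg : c.gate j = Gate.and l r)
    (h : (dfaA c).step p (Alpha.a j) ≠ StA.sink) : (dfaA c).step p (Alpha.a j) = StA.g l := by
  cases p <;> simp_all [dfaA]

theorem dfaA_step_b_of_and {p : StA n} {j l r : Fin (n + 1)} (hg : c.gate j = Gate.and l r)
    (h : (dfaA c).step p (Alpha.b j) ≠ StA.sink) : (dfaA c).step p (Alpha.b j) = StA.g r := by
  cases p <;> simp_all [dfaA]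

theorem exists_isBlocking_mem_of_evalFrom_mem_accept (i : Fin (n + 1)) (hi : c.val i = false)
    {u : List (Alpha n)} (hu : (dfaA c).evalFrom (StA.g i) u ∈ (dfaA c).accept) :
    ∃ j ≤ i, c.IsBlocking j ∧ (Alpha.a j ∈ u ∨ Alpha.b j ∈ u) := by
  induction i using WellFoundedLT.induction generalizing u with
  | _ i ih =>
  obtain _ | ⟨ch, u⟩ := u
  · simp [dfaA] at hu
  rw [DFA.evalFrom_cons] at hu
  have hch := dfaA_step_g c ((isSink_dfaA c).ne_of_evalFrom_mem_accept hu)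
  have hmem : Alpha.a i ∈ ch :: u ∨ Alpha.b i ∈ ch :: u := by rcases hch with rfl | rfl <;> simp
  match hg : c.gate i with
  | .zero => exact ⟨i, le_rfl, ⟨hi, .inl hg⟩, hmem⟩
  | .one => simp [c.val_one hg] at hi
  | .and l r => exact ⟨i, le_rfl, ⟨hi, .inr ⟨l, r, hg⟩⟩, hmem⟩
  | .or l r =>
    obtain ⟨hl, hr⟩ : c.val l = false ∧ c.val r = false := by simpa [c.val_or hg] using hi
    obtain ⟨k, hki, hk, hstep⟩ :
        ∃ k < i, c.val k = false ∧ (dfaA c).step (StA.g i) ch = StA.g k := by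
      rcases hch with rfl | rfl
      · exact ⟨l, (c.or_lt _ _ _ hg).1, hl, by simp [dfaA, hg]⟩
      · exact ⟨r, (c.or_lt _ _ _ hg).2, hr, by simp [dfaA, hg]⟩
    rw [hstep] at hu
    obtain ⟨j, hjk, hj, hmem⟩ := ih k hki hk hu
    exact ⟨j, hjk.trans hki.le, hj, hmem.imp (List.mem_cons_of_mem ch) (List.mem_cons_of_mem ch)⟩

theorem exists_isBlocking_mem_of_mem_accepts (hval : c.val (Fin.last n) = false)
    {u : List (Alpha n)} (hu : u ∈ (dfaA c).accepts) :
    ∃ j, c.IsBlocking j ∧ (Alpha.a j ∈ u ∨ Alpha.b j ∈ u) := by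
  obtain _ | ⟨ch, u⟩ := u
  · simp [DFA.mem_accepts, dfaA] at hu
  rw [DFA.mem_accepts, DFA.eval, DFA.evalFrom_cons] at hu
  rw [dfaA_step_start c ((isSink_dfaA c).ne_of_evalFrom_mem_accept hu)] at hu
  obtain ⟨j, -, hj, hmem⟩ := exists_isBlocking_mem_of_evalFrom_mem_accept c _ hval hu
  exact ⟨j, hj, hmem.imp (List.mem_cons_of_mem ch) (List.mem_cons_of_mem ch)⟩

theorem exists_suffix_evalFrom_mem_accept_of_mem_a {u : List (Alpha n)} {j l r : Fin (n + 1)}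
    (hu : u ∈ (dfaA c).accepts) (hg : c.gate j = Gate.and l r) (ha : Alpha.a j ∈ u) :
    ∃ v, v <:+ u ∧ (dfaA c).evalFrom (StA.g l) v ∈ (dfaA c).accept := by
  obtain ⟨v, w, rfl, hne, hacc⟩ := (isSink_dfaA c).exists_eq_append_cons_of_mem_accepts hu ha
  rw [dfaA_step_a_of_and c hg hne] at hacc
  exact ⟨w, (List.suffix_cons _ w).trans (List.suffix_append v _), hacc⟩

theorem exists_suffix_evalFrom_mem_accept_of_mem_b {u : List (Alpha n)} {j l r : Fin (n + 1)}
    (hu : u ∈ (dfaA c).accepts) (hg : c.gate j = Gate.and l r) (hb : Alpha.b j ∈ u) :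
    ∃ v, v <:+ u ∧ (dfaA c).evalFrom (StA.g r) v ∈ (dfaA c).accept := by
  obtain ⟨v, w, rfl, hne, hacc⟩ := (isSink_dfaA c).exists_eq_append_cons_of_mem_accepts hu hb
  rw [dfaA_step_b_of_and c hg hne] at hacc
  exact ⟨w, (List.suffix_cons _ w).trans (List.suffix_append v _), hacc⟩

end AutomatonA

section AutomatonB

theorem isSink_dfaB : (dfaB c).IsSink StB.sink := ⟨fun _ => rfl, by simp [dfaB]⟩

theorem dfaB_step_eq_g {p : StB n} {ch : Alpha n} {j : Fin (n + 1)}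
    (h : (dfaB c).step p ch = StB.g j) : ch = Alpha.a j := by
  cases p <;> cases ch <;> simp only [dfaB] at h <;> repeat' split at h
  all_goals simp_all

theorem dfaB_step_g {ch : Alpha n} {j : Fin (n + 1)}
    (h : (dfaB c).step (StB.g j) ch ≠ StB.sink) : ch = Alpha.b j := by
  cases ch <;> simp_all [dfaB]

theorem dfaB_step_a_of_and {p : StB n} {j l r : Fin (n + 1)} (hg : c.gate j = Gate.and l r)
    (h : (dfaB c).step p (Alpha.a j) ≠ StB.sink) : (dfaB c).step p (Alpha.a j) = StB.g j := by
  cases p <;> simp_all [dfaB]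

theorem dfaB_step_b_of_and {p : StB n} {j l r : Fin (n + 1)} (hg : c.gate j = Gate.and l r)
    (h : (dfaB c).step p (Alpha.b j) ≠ StB.sink) : p = StB.g j := by
  cases p <;> simp_all [dfaB]

theorem dfaB_step_of_zero {p : StB n} {m : Fin (n + 1)} (hg : c.gate m = Gate.zero) :
    (dfaB c).step p (Alpha.a m) = StB.sink ∧ (dfaB c).step p (Alpha.b m) = StB.sink := by
  cases p with
  | g i =>
    refine ⟨rfl, ?_⟩
    by_cases h : m = i
    · subst h
      simp [dfaB, hg]
    · simp [dfaB, h]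
  | _ => simp [dfaB, hg]

theorem not_mem_of_mem_accepts_of_zero {v : List (Alpha n)} {m : Fin (n + 1)}
    (hv : v ∈ (dfaB c).accepts) (hg : c.gate m = Gate.zero) :
    ¬(Alpha.a m ∈ v ∨ Alpha.b m ∈ v) := by
  rintro (hmem | hmem) <;>
    obtain ⟨_, _, _, hne, -⟩ := (isSink_dfaB c).exists_eq_append_cons_of_mem_accepts hv hmem
  exacts [hne (dfaB_step_of_zero c hg).1, hne (dfaB_step_of_zero c hg).2]

theorem mem_b_of_mem_accepts_of_mem_a {v : List (Alpha n)} {j l r : Fin (n + 1)}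
    (hv : v ∈ (dfaB c).accepts) (hg : c.gate j = Gate.and l r) (ha : Alpha.a j ∈ v) :
    Alpha.b j ∈ v := by
  obtain ⟨u, w, rfl, hne, hacc⟩ := (isSink_dfaB c).exists_eq_append_cons_of_mem_accepts hv ha
  rw [dfaB_step_a_of_and c hg hne] at hacc
  obtain _ | ⟨ch, w⟩ := w
  · simp [dfaB] at hacc
  rw [DFA.evalFrom_cons] at hacc
  obtain rfl := dfaB_step_g c ((isSink_dfaB c).ne_of_evalFrom_mem_accept hacc)
  simp

theorem mem_a_of_mem_accepts_of_mem_b {v : List (Alpha n)} {j l r : Fin (n + 1)}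
    (hv : v ∈ (dfaB c).accepts) (hg : c.gate j = Gate.and l r) (hb : Alpha.b j ∈ v) :
    Alpha.a j ∈ v := by
  obtain ⟨u, w, rfl, hne, -⟩ := (isSink_dfaB c).exists_eq_append_cons_of_mem_accepts hv hb
  have hu := dfaB_step_b_of_and c hg hne
  obtain rfl | ⟨u, ch, rfl⟩ := u.eq_nil_or_concat'
  · simp [dfaB] at hu
  rw [DFA.eval_append_singleton] at hu
  obtain rfl := dfaB_step_eq_g c hu
  simp

end AutomatonB

theorem not_mem_tower_of_isBlocking {w : ℕ → List (Alpha n)}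
    (hw : IsInfiniteTower {u | u ∈ (dfaA c).accepts} {u | u ∈ (dfaB c).accepts} w)
    (j : Fin (n + 1)) (hj : c.IsBlocking j) {t : ℕ} (ht : w t ∈ (dfaA c).accepts) :
    ¬(Alpha.a j ∈ w t ∨ Alpha.b j ∈ w t) := by
  induction j using WellFoundedLT.induction generalizing t with
  | _ j ih =>
  intro hmem
  have hsub := (hw.sublist_succ t).subset
  have ht1 : w (t + 1) ∈ (dfaB c).accepts := hw.succ_mem_right ht
  obtain ⟨hval, hzero | ⟨l, r, hg⟩⟩ := hj
  · exact not_mem_of_mem_accepts_of_zero c ht1 hzero (hmem.imp (hsub ·) (hsub ·))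
  have ht2 : w (t + 2) ∈ (dfaA c).accepts := hw.succ_mem_left ht1
  have ha1 : Alpha.a j ∈ w (t + 1) := hmem.elim (hsub ·)
    fun hb => mem_a_of_mem_accepts_of_mem_b c ht1 hg (hsub hb)
  have hb1 : Alpha.b j ∈ w (t + 1) := mem_b_of_mem_accepts_of_mem_a c ht1 hg ha1
  -- reading `aⱼ` or `bⱼ` in `w (t + 2)`, the run of `A'` moves on to a false child of `j`
  obtain ⟨k, hkj, hk, v, hv, hacc⟩ : ∃ k < j, c.val k = false ∧
      ∃ v, v <:+ w (t + 2) ∧ (dfaA c).evalFrom (StA.g k) v ∈ (dfaA c).accept := by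
    cases hl : c.val l
    · exact ⟨l, (c.and_lt _ _ _ hg).1, hl, exists_suffix_evalFrom_mem_accept_of_mem_a c ht2 hg
        ((hw.sublist_succ _).subset ha1)⟩
    · have hr : c.val r = false := by simpa [c.val_and hg, hl] using hval
      exact ⟨r, (c.and_lt _ _ _ hg).2, hr, exists_suffix_evalFrom_mem_accept_of_mem_b c ht2 hg
        ((hw.sublist_succ _).subset hb1)⟩
  obtain ⟨j', hj'k, hj', hmem'⟩ := exists_isBlocking_mem_of_evalFrom_mem_accept c k hk hacc
  exact ih j' (hj'k.trans_lt hkj) hj' ht2 (hmem'.imp (hv.subset ·) (hv.subset ·))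

end

/-- If there is an infinite tower between `L(A')` and `L(B)`, then the output gate
of the monotone circuit evaluates to `1`. -/
theorem stmt12 {n : ℕ} (c : Circuit n)
    (h : HasInfiniteTower {w : List (Alpha n) | w ∈ (dfaA c).accepts}
      {w : List (Alpha n) | w ∈ (dfaB c).accepts}) :
    c.val (Fin.last n) = true := by
  obtain ⟨w, hw⟩ := h
  obtain ⟨t, ht⟩ := hw.exists_mem_left
  by_contra hval
  obtain ⟨j, hj, hmem⟩ :=
    exists_isBlocking_mem_of_mem_accepts c (Bool.eq_false_iff.mpr hval) ht
  exact not_mem_tower_of_isBlocking c hw j hj ht hmem
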